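/- arXiv:2407.03899 — 2 statements merged into one kernel-verified Lean document; each statement's English description precedes it below -/
import Mathlib

section
/- Let X and Y be independent rate-1 exponential random variables, R > 0, and define user 2's minimal total transmit power W(X,Y) = (e^R − 1)/Y if Y ≥ X; W(X,Y) = e^R(e^R − 1)/X if Y ≤ e^{−2R}X; and W(X,Y) = 2e^R/√(XY) − e^R/X − 1/Y otherwise. Define τ = ∫₁^{e^R} (y − 1)·( min{e^{2R}, g₂(y)} − max{1, g₁(y)} ) dy, where g₁(y) = (2e^{2R} − e^R y − 2e^R√(e^{2R} − e^R y))/y² and g₂(y) = (2e^{2R} − e^R y + 2e^R√(e^{2R} − e^R y))/y². Then the power outage probability P^out(ρ) = P(W(X,Y) ≥ ρ) satisfies lim_{ρ→∞} ρ² · P^out(ρ) = (e^R − 1)² + τ. -/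
/-
`W` is homogeneous of degree `-1`, so `{W(X, Y) ≥ ρ} = {(X, Y) ∈ ρ⁻¹ • S}` for
`S = {W ≥ 1}`. The joint exponential density tends to `1` near the origin, so by dominated
convergence `ρ² P((X, Y) ∈ ρ⁻¹ • S)` tends to the area of `S` in the positive quadrant.
Sliced at fixed `b`, that region is `[0, b min(e^{2R}, g₂(b + 1))]` (OMA and hybrid regimes; the
hybrid condition is a quadratic inequality in `√(a / b)`) together with
`[e^{2R} b, e^R (e^R - 1)]` (NOMA regime), and it is empty for `b > e^R - 1`. Integrating over `b`
and substituting `y = b + 1` gives `(e^R - 1)² + τ`, since `g₁ ≤ 1` on `[1, e^R]`.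
-/

open MeasureTheory ProbabilityTheory Filter

/-- User 2's minimal total transmit power as a function of its channel gains `a = h_{2,1}`,
`b = h_{2,2}`: pure OMA if `b ≥ a`, pure NOMA if `b ≤ e^{-2R} a`, hybrid NOMA otherwise. -/
noncomputable def W (R a b : ℝ) : ℝ :=
  if a ≤ b then (Real.exp R - 1) / b
  else if b ≤ Real.exp (-(2 * R)) * a then Real.exp R * (Real.exp R - 1) / a
  else 2 * Real.exp R / Real.sqrt (a * b) - Real.exp R / a - 1 / b

noncomputable def g1 (R y : ℝ) : ℝ :=
  (2 * Real.exp (2 * R) - Real.exp R * y -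
      2 * Real.exp R * Real.sqrt (Real.exp (2 * R) - Real.exp R * y)) / y ^ 2

noncomputable def g2 (R y : ℝ) : ℝ :=
  (2 * Real.exp (2 * R) - Real.exp R * y +
      2 * Real.exp R * Real.sqrt (Real.exp (2 * R) - Real.exp R * y)) / y ^ 2

open Real Set
open scoped ENNReal Topology Pointwise

section Algebra

variable {R y : ℝ}

lemma exp_two_mul_eq_sq (R : ℝ) : exp (2 * R) = exp R ^ 2 := by
  rw [two_mul, exp_add, sq]

lemma g1_eq_sq (hy : y ≤ exp R) :
    g1 R y = ((exp R - √(exp R ^ 2 - exp R * y)) / y) ^ 2 := by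
  have hs := sq_sqrt (by nlinarith [exp_pos R] : 0 ≤ exp R ^ 2 - exp R * y)
  rw [g1, exp_two_mul_eq_sq, div_pow]
  congr 1
  linear_combination -hs

lemma g2_eq_sq (hy : y ≤ exp R) :
    g2 R y = ((exp R + √(exp R ^ 2 - exp R * y)) / y) ^ 2 := by
  have hs := sq_sqrt (by nlinarith [exp_pos R] : 0 ≤ exp R ^ 2 - exp R * y)
  rw [g2, exp_two_mul_eq_sq, div_pow]
  congr 1
  linear_combination -hs

lemma sub_sqrt_le_self_le_add_sqrt {E : ℝ} (hy : 0 < y) (hyE : y ≤ E) :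
    E - √(E ^ 2 - E * y) ≤ y ∧ y ≤ E + √(E ^ 2 - E * y) := by
  have hs := sq_sqrt (by nlinarith : 0 ≤ E ^ 2 - E * y)
  have hs0 := sqrt_nonneg (E ^ 2 - E * y)
  constructor <;> nlinarith

lemma g1_le_one (h1 : 0 < y) (h2 : y ≤ exp R) : g1 R y ≤ 1 := by
  obtain ⟨hlow, -⟩ := sub_sqrt_le_self_le_add_sqrt h1 h2
  have hsE : √(exp R ^ 2 - exp R * y) ≤ exp R := by
    rw [sqrt_le_left (exp_pos R).le]; nlinarith [exp_pos R]
  rw [g1_eq_sq h2, sq_le_one_iff₀ (div_nonneg (by linarith) h1.le), div_le_one h1]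
  exact hlow

lemma one_le_g2 (h1 : 0 < y) (h2 : y ≤ exp R) : 1 ≤ g2 R y := by
  obtain ⟨-, hup⟩ := sub_sqrt_le_self_le_add_sqrt h1 h2
  rw [g2_eq_sq h2, one_le_sq_iff₀ (div_nonneg (by linarith) h1.le), one_le_div h1]
  exact hup

-- The roots of `y u² - 2 E u + E` are `(E ± √(E² - E y)) / y`; the smaller one is `≤ 1 < u`.
lemma quadratic_nonpos_iff {E u : ℝ} (hE : 0 < E) (hy : 0 < y) (hu : 1 < u) :
    y * u ^ 2 - 2 * E * u + E ≤ 0 ↔ y ≤ E ∧ y * u ≤ E + √(E ^ 2 - E * y) := by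
  constructor
  · intro h
    have hsq : (y * u - E) ^ 2 ≤ E ^ 2 - E * y := by nlinarith
    have hyE : y ≤ E := by nlinarith [sq_nonneg (y * u - E)]
    exact ⟨hyE, by linarith [(abs_le.1 (abs_le_sqrt hsq)).2]⟩
  · rintro ⟨hyE, hup⟩
    obtain ⟨hlow, -⟩ := sub_sqrt_le_self_le_add_sqrt hy hyE
    have hs := sq_sqrt (by nlinarith : 0 ≤ E ^ 2 - E * y)
    have hsq : (y * u - E) ^ 2 ≤ E ^ 2 - E * y := by
      rw [← hs]; exact sq_le_sq' (by nlinarith) (by linarith)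
    nlinarith

-- With `a = b u²`, the inequality becomes `(b + 1) u² - 2 e^R u + e^R ≤ 0`, and `g₂(b + 1)`
-- is the square of the larger root.
lemma one_le_hybrid_iff {a b : ℝ} (hb : 0 < b) (hba : b < a) :
    1 ≤ 2 * exp R / √(a * b) - exp R / a - 1 / b ↔
      b + 1 ≤ exp R ∧ a ≤ b * g2 R (b + 1) := by
  obtain ⟨u, hu, rfl⟩ : ∃ u, 1 < u ∧ a = b * u ^ 2 :=
    ⟨√(a / b), by rw [lt_sqrt zero_le_one, one_pow, one_lt_div hb]; exact hba,
      by rw [sq_sqrt (div_nonneg (hb.trans hba).le hb.le)]; field_simp⟩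
  have hu0 : 0 < u := one_pos.trans hu
  have hsqrt : √(b * u ^ 2 * b) = b * u := by
    rw [show b * u ^ 2 * b = (b * u) ^ 2 by ring, sqrt_sq (by positivity)]
  have hW : 2 * exp R / (b * u) - exp R / (b * u ^ 2) - 1 / b
      = 1 - ((b + 1) * u ^ 2 - 2 * exp R * u + exp R) / (b * u ^ 2) := by
    field_simp; ring
  rw [hsqrt, hW, le_sub_self_iff, div_le_iff₀ (by positivity), zero_mul,
    quadratic_nonpos_iff (exp_pos R) (by linarith) hu]
  refine and_congr_right fun hyE => ?_
  rw [g2_eq_sq hyE, mul_le_mul_iff_right₀ hb,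
    sq_le_sq₀ hu0.le (div_nonneg (by positivity) (by linarith)), le_div_iff₀ (by linarith),
    mul_comm]

end Algebra

section PowerFunction

variable {R a b : ℝ}

lemma W_of_le (h : a ≤ b) : W R a b = (exp R - 1) / b := if_pos h

lemma W_of_noma (hba : b < a) (h : exp (2 * R) * b ≤ a) :
    W R a b = exp R * (exp R - 1) / a := by
  rw [W, if_neg hba.not_ge, if_pos]
  rwa [exp_neg, ← div_eq_inv_mul, le_div_iff₀ (exp_pos _), mul_comm]

lemma W_of_hybrid (hba : b < a) (h : a < exp (2 * R) * b) :
    W R a b = 2 * exp R / √(a * b) - exp R / a - 1 / b := by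
  rw [W, if_neg hba.not_ge, if_neg]
  rwa [exp_neg, ← div_eq_inv_mul, le_div_iff₀ (exp_pos _), mul_comm, not_le]

lemma W_mul {c : ℝ} (hc : 0 < c) : W R (c * a) (c * b) = c⁻¹ * W R a b := by
  have hsqrt : √(c * a * (c * b)) = c * √(a * b) := by
    rw [show c * a * (c * b) = c ^ 2 * (a * b) by ring, sqrt_mul (sq_nonneg c), sqrt_sq hc.le]
  simp only [W, mul_le_mul_iff_right₀ hc, mul_left_comm _ c a, hsqrt]
  split_ifs <;> field_simp

lemma measurable_W (R : ℝ) : Measurable fun p : ℝ × ℝ => W R p.1 p.2 := by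
  unfold W
  refine Measurable.ite (measurableSet_le measurable_fst measurable_snd) (by fun_prop) ?_
  exact Measurable.ite (measurableSet_le measurable_snd (by fun_prop)) (by fun_prop) (by fun_prop)

end PowerFunction

section Region

variable {R b : ℝ}

lemma W_lt_one (hb : 0 < b) (hbE : exp R < b + 1) (a : ℝ) : W R a b < 1 := by
  have hE := exp_pos R
  have hE2 := exp_two_mul_eq_sq R
  rcases le_or_gt a b with hab | hba
  · rw [W_of_le hab, div_lt_one hb]; linarith
  rcases le_or_gt (exp (2 * R) * b) a with hn | hh
  · rw [W_of_noma hba hn, div_lt_one (hb.trans hba)]; nlinarith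
  · rw [W_of_hybrid hba hh, ← not_le, one_le_hybrid_iff hb hba]
    exact fun h => hbE.not_ge h.1

lemma setOf_one_le_W_eq (hR : 0 < R) (hb : 0 < b) (hbE : b + 1 ≤ exp R) :
    {a | 0 ≤ a ∧ 1 ≤ W R a b} =
      Ico 0 (exp (2 * R) * b) ∩ Iic (b * g2 R (b + 1)) ∪
        Icc (exp (2 * R) * b) (exp R * (exp R - 1)) := by
  have hE2 : 1 < exp (2 * R) := one_lt_exp_iff.2 (by linarith)
  have hg2 := one_le_g2 (R := R) (by linarith) hbE
  ext a
  simp only [mem_ofPred_eq, mem_union, mem_inter_iff, mem_Ico, mem_Iic, mem_Icc]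
  rcases le_or_gt a b with hab | hba
  · rw [W_of_le hab, one_le_div hb]
    constructor
    · exact fun h => Or.inl ⟨⟨h.1, by nlinarith⟩, by nlinarith⟩
    · rintro (⟨⟨h, -⟩, -⟩ | ⟨h, -⟩)
      · exact ⟨h, by linarith⟩
      · nlinarith
  rcases le_or_gt (exp (2 * R) * b) a with hn | hh
  · rw [W_of_noma hba hn, one_le_div (hb.trans hba)]
    constructor
    · exact fun h => Or.inr ⟨hn, h.2⟩
    · rintro (⟨⟨-, h⟩, -⟩ | ⟨-, h⟩)
      · linarith
      · exact ⟨(hb.trans hba).le, h⟩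
  · rw [W_of_hybrid hba hh, one_le_hybrid_iff hb hba]
    constructor
    · exact fun h => Or.inl ⟨⟨h.1, hh⟩, h.2.2⟩
    · rintro (⟨-, h⟩ | ⟨h, -⟩)
      · exact ⟨(hb.trans hba).le, hbE, h⟩
      · linarith

lemma volume_Ico_inter_Iic (a c d : ℝ) :
    volume (Ico a c ∩ Iic d) = ENNReal.ofReal (min c d - a) := by
  rcases lt_or_ge d c with hdc | hcd
  · have : Ico a c ∩ Iic d = Icc a d :=
      Subset.antisymm (fun x hx => ⟨hx.1.1, hx.2⟩)
        fun x hx => ⟨⟨hx.1, hx.2.trans_lt hdc⟩, hx.2⟩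
    rw [this, Real.volume_Icc, min_eq_right hdc.le]
  · rw [inter_eq_left.2 fun x hx => hx.2.le.trans hcd, Real.volume_Ico, min_eq_left hcd]

lemma mul_min_g2_nonneg (hb : 0 ≤ b) (hbE : b + 1 ≤ exp R) :
    0 ≤ b * min (exp (2 * R)) (g2 R (b + 1)) :=
  mul_nonneg hb (le_min (exp_pos _).le (zero_le_one.trans (one_le_g2 (by linarith) hbE)))

noncomputable def sliceLength (R b : ℝ) : ℝ :=
  b * min (exp (2 * R)) (g2 R (b + 1)) + max (exp R * (exp R - 1) - exp (2 * R) * b) 0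

lemma sliceLength_nonneg (hb : 0 ≤ b) (hbE : b + 1 ≤ exp R) : 0 ≤ sliceLength R b :=
  add_nonneg (mul_min_g2_nonneg hb hbE) (le_max_right _ _)

lemma volume_setOf_one_le_W (hR : 0 < R) (hb : 0 < b) (hbE : b + 1 ≤ exp R) :
    volume {a | 0 ≤ a ∧ 1 ≤ W R a b} = ENNReal.ofReal (sliceLength R b) := by
  have hdisj : Disjoint (Ico 0 (exp (2 * R) * b) ∩ Iic (b * g2 R (b + 1)))
      (Icc (exp (2 * R) * b) (exp R * (exp R - 1))) :=
    disjoint_left.2 fun x hx hx' => hx.1.2.not_ge hx'.1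
  have hmin :
      min (exp (2 * R) * b) (b * g2 R (b + 1)) = b * min (exp (2 * R)) (g2 R (b + 1)) := by
    rw [mul_min_of_nonneg _ _ hb.le, mul_comm]
  rw [setOf_one_le_W_eq hR hb hbE, measure_union hdisj measurableSet_Icc, volume_Ico_inter_Iic,
    Real.volume_Icc, sliceLength, sub_zero, hmin,
    ENNReal.ofReal_add (mul_min_g2_nonneg hb.le hbE) (le_max_right _ _), ENNReal.ofReal_max]
  simp

lemma continuousOn_g2 (R : ℝ) : ContinuousOn (g2 R) {0}ᶜ := fun y hy => by
  have : y ≠ 0 := hy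
  unfold g2
  exact ContinuousAt.continuousWithinAt (by fun_prop (disch := exact pow_ne_zero 2 this))

lemma continuousOn_mul_min_g2 (R : ℝ) :
    ContinuousOn (fun b => b * min (exp (2 * R)) (g2 R (b + 1))) (Ioi (-1)) :=
  continuousOn_id.mul <| continuousOn_const.inf <| (continuousOn_g2 R).comp (by fun_prop)
    fun b hb => by simp only [mem_compl_iff, mem_singleton_iff]; linarith [mem_Ioi.1 hb]

lemma volume_one_le_W_inter_Ici (hR : 0 < R) :
    volume ({q : ℝ × ℝ | 1 ≤ W R q.1 q.2} ∩ Ici 0) =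
      ENNReal.ofReal (∫ b in (0 : ℝ)..exp R - 1, sliceLength R b) := by
  set A := {q : ℝ × ℝ | 1 ≤ W R q.1 q.2} ∩ Ici 0
  have hE : 0 ≤ exp R - 1 := by linarith [add_one_le_exp R]
  have hA : MeasurableSet A :=
    (measurableSet_le measurable_const (measurable_W R)).inter measurableSet_Ici
  have hslice : ∀ b ≠ 0, volume ((fun a => (a, b)) ⁻¹' A) =
      (Ioc 0 (exp R - 1)).indicator (fun b => ENNReal.ofReal (sliceLength R b)) b := by
    intro b hb0
    rcases hb0.lt_or_gt with hb | hb
    · rw [indicator_of_notMem fun h => hb.not_gt h.1]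
      exact measure_mono_null (fun a ha => (hb.not_ge ha.2.2).elim) measure_empty
    · have : (fun a => (a, b)) ⁻¹' A = {a | 0 ≤ a ∧ 1 ≤ W R a b} := by
        ext a; simp [A, Prod.le_def, hb.le, and_comm]
      rw [this]
      rcases le_or_gt b (exp R - 1) with hbE | hbE
      · rw [indicator_of_mem (mem_Ioc.2 ⟨hb, hbE⟩), volume_setOf_one_le_W hR hb (by linarith)]
      · rw [indicator_of_notMem fun h => hbE.not_ge h.2]
        simp [(W_lt_one hb (by linarith) _).not_ge]
  have hint : IntervalIntegrable (sliceLength R) volume 0 (exp R - 1) :=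
    (((continuousOn_mul_min_g2 R).add (by fun_prop)).mono fun b hb => by
      rw [uIcc_of_le hE] at hb; exact mem_Ioi.2 (by linarith [hb.1])).intervalIntegrable
  rw [Measure.volume_eq_prod, Measure.prod_apply_symm hA,
    lintegral_congr_ae ((measure_eq_zero_iff_ae_notMem.1 (measure_singleton 0)).mono hslice),
    lintegral_indicator measurableSet_Ioc, intervalIntegral.integral_of_le hE,
    ofReal_integral_eq_lintegral_ofReal hint.1 ((ae_restrict_iff' measurableSet_Ioc).2
      (ae_of_all _ fun b hb => sliceLength_nonneg hb.1.le (by linarith [hb.2])))]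

lemma integral_max_sub_mul_zero {m k c : ℝ} (hk : 0 < k) (hm : 0 ≤ m) (hmc : m ≤ k * c) :
    ∫ b in (0 : ℝ)..c, max (m - k * b) 0 = m ^ 2 / (2 * k) := by
  have hcont : Continuous fun b => max (m - k * b) 0 := by fun_prop
  have hmk : 0 ≤ m / k := div_nonneg hm hk.le
  have hmkc : m / k ≤ c := by rwa [div_le_iff₀ hk, mul_comm]
  have hpos :
      ∫ b in (0 : ℝ)..m / k, max (m - k * b) 0 = ∫ b in (0 : ℝ)..m / k, (m - k * b) := by
    refine intervalIntegral.integral_congr fun b hb => max_eq_left ?_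
    rw [uIcc_of_le hmk] at hb
    have := (le_div_iff₀' hk).1 hb.2
    linarith
  have hzero : ∫ b in m / k..c, max (m - k * b) 0 = 0 := by
    rw [intervalIntegral.integral_congr (g := fun _ => (0 : ℝ)), intervalIntegral.integral_zero]
    intro b hb
    rw [uIcc_of_le hmkc] at hb
    have := (div_le_iff₀' hk).1 hb.1
    exact max_eq_right (by linarith)
  rw [← intervalIntegral.integral_add_adjacent_intervals (b := m / k)
    (hcont.intervalIntegrable _ _) (hcont.intervalIntegrable _ _), hpos, hzero, add_zero,
    intervalIntegral.integral_sub intervalIntegrable_const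
      ((continuous_const_mul k).intervalIntegrable _ _),
    intervalIntegral.integral_const, intervalIntegral.integral_const_mul, integral_id, smul_eq_mul]
  field_simp [hk.ne']
  ring

lemma integral_sliceLength (hR : 0 < R) :
    ∫ b in (0 : ℝ)..exp R - 1, sliceLength R b = (exp R - 1) ^ 2 +
      ∫ y in (1 : ℝ)..exp R, (y - 1) * (min (exp (2 * R)) (g2 R y) - max 1 (g1 R y)) := by
  have hE : 1 ≤ exp R := one_le_exp hR.le
  have hgi : IntervalIntegrable (fun y => (y - 1) * min (exp (2 * R)) (g2 R y)) volume 1 (exp R) :=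
    ContinuousOn.intervalIntegrable <| (continuousOn_id.sub continuousOn_const).mul <|
      continuousOn_const.inf <| (continuousOn_g2 R).mono fun y hy => by
        rw [uIcc_of_le hE] at hy; exact (zero_lt_one.trans_le hy.1).ne'
  have hsub : ∫ b in (0 : ℝ)..exp R - 1, b * min (exp (2 * R)) (g2 R (b + 1)) =
      ∫ y in (1 : ℝ)..exp R, (y - 1) * min (exp (2 * R)) (g2 R y) := by
    simpa using intervalIntegral.integral_comp_add_right
      (fun y => (y - 1) * min (exp (2 * R)) (g2 R y)) (1 : ℝ) (a := 0) (b := exp R - 1)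
  have hτ : ∫ y in (1 : ℝ)..exp R, (y - 1) * (min (exp (2 * R)) (g2 R y) - max 1 (g1 R y)) =
      ∫ y in (1 : ℝ)..exp R, ((y - 1) * min (exp (2 * R)) (g2 R y) - (y - 1)) := by
    refine intervalIntegral.integral_congr fun y hy => ?_
    rw [uIcc_of_le hE] at hy
    simp only [max_eq_left (g1_le_one (by linarith [hy.1]) hy.2)]
    ring
  have htri : ∫ b in (0 : ℝ)..exp R - 1, max (exp R * (exp R - 1) - exp (2 * R) * b) 0 =
      (exp R - 1) ^ 2 / 2 := by
    have hle : exp R * (exp R - 1) ≤ exp (2 * R) * (exp R - 1) := by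
      rw [exp_two_mul_eq_sq]; nlinarith [mul_nonneg (exp_pos R).le (mul_self_nonneg (exp R - 1))]
    rw [integral_max_sub_mul_zero (exp_pos _) (by positivity) hle, exp_two_mul_eq_sq]
    field_simp
  have hmin : IntervalIntegrable (fun b => b * min (exp (2 * R)) (g2 R (b + 1))) volume 0
      (exp R - 1) :=
    ((continuousOn_mul_min_g2 R).mono fun b hb => by
      rw [uIcc_of_le (by linarith)] at hb; exact mem_Ioi.2 (by linarith [hb.1])).intervalIntegrable
  rw [hτ, intervalIntegral.integral_sub hgi (Continuous.intervalIntegrable (by fun_prop) _ _),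
    ← hsub]
  unfold sliceLength
  rw [intervalIntegral.integral_add hmin (Continuous.intervalIntegrable (by fun_prop) _ _), htri,
    intervalIntegral.integral_comp_sub_right (fun x => x), integral_id]
  ring

end Region

section ExponentialScaling

variable {r : ℝ}

lemma expMeasure_prod_eq_withDensity (r : ℝ) :
    (expMeasure r).prod (expMeasure r) =
      volume.withDensity fun p : ℝ × ℝ => exponentialPDF r p.1 * exponentialPDF r p.2 :=
  prod_withDensity (measurable_exponentialPDFReal r).ennreal_ofReal
    (measurable_exponentialPDFReal r).ennreal_ofReal

lemma exponentialPDF_div_le_indicator (hr : 0 ≤ r) {ρ : ℝ} (hρ : 0 < ρ) (x : ℝ) :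
    exponentialPDF r (x / ρ) ≤ (Ici 0).indicator (fun _ => ENNReal.ofReal r) x := by
  rcases lt_or_ge x 0 with hx | hx
  · simp [exponentialPDF_of_neg (div_neg_of_neg_of_pos hx hρ)]
  · rw [exponentialPDF_of_nonneg (div_nonneg hx hρ.le), indicator_of_mem (mem_Ici.2 hx)]
    refine ENNReal.ofReal_le_ofReal (mul_le_of_le_one_right hr (exp_le_one_iff.2 ?_))
    exact neg_nonpos.2 (mul_nonneg hr (div_nonneg hx hρ.le))

lemma tendsto_exponentialPDF_div_atTop (r x : ℝ) :
    Tendsto (fun ρ => exponentialPDF r (x / ρ)) atTop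
      (𝓝 ((Ici 0).indicator (fun _ => ENNReal.ofReal r) x)) := by
  rcases lt_or_ge x 0 with hx | hx
  · rw [indicator_of_notMem (by simpa using hx)]
    refine tendsto_const_nhds.congr' ?_
    filter_upwards [eventually_gt_atTop 0] with ρ hρ
    rw [exponentialPDF_of_neg (div_neg_of_neg_of_pos hx hρ)]
  · rw [indicator_of_mem (mem_Ici.2 hx)]
    have hlim : Tendsto (fun ρ => r * exp (-(r * (x / ρ)))) atTop (𝓝 r) := by
      have h : Tendsto (fun ρ => -(r * (x / ρ))) atTop (𝓝 0) := by
        simpa using ((tendsto_const_nhds (x := x)).div_atTop tendsto_id).const_mul r |>.neg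
      simpa using ((continuous_exp.tendsto 0).comp h).const_mul r
    refine (ENNReal.tendsto_ofReal hlim).congr' ?_
    filter_upwards [eventually_gt_atTop 0] with ρ hρ
    rw [exponentialPDF_of_nonneg (div_nonneg hx hρ.le)]

lemma ofReal_sq_mul_expMeasure_prod_inv_smul {ρ : ℝ} (hρ : 0 < ρ) {S : Set (ℝ × ℝ)}
    (hS : MeasurableSet S) :
    ENNReal.ofReal (ρ ^ 2) * (expMeasure r).prod (expMeasure r) (ρ⁻¹ • S) =
      ∫⁻ p in S, exponentialPDF r (p.1 / ρ) * exponentialPDF r (p.2 / ρ) := by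
  have hmeas : Measurable fun p : ℝ × ℝ => exponentialPDF r p.1 * exponentialPDF r p.2 := by
    have h : Measurable (exponentialPDF r) := (measurable_exponentialPDFReal r).ennreal_ofReal
    exact (h.comp measurable_fst).mul (h.comp measurable_snd)
  have hmap :
      (volume : Measure (ℝ × ℝ)).map (ρ⁻¹ • ·) = ENNReal.ofReal (ρ ^ 2) • volume := by
    rw [Measure.map_addHaar_smul _ (inv_ne_zero hρ.ne')]
    simp [abs_of_pos hρ]
  rw [expMeasure_prod_eq_withDensity, withDensity_apply _ (hS.const_smul₀ _),
    ← smul_eq_mul, ← lintegral_smul_measure, ← Measure.restrict_smul, ← hmap,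
    setLIntegral_map (hS.const_smul₀ _) hmeas (measurable_const_smul _),
    preimage_smul_inv₀ hρ.ne', smul_inv_smul₀ hρ.ne']
  simp [div_eq_inv_mul]

theorem tendsto_ofReal_sq_mul_expMeasure_prod_inv_smul (hr : 0 ≤ r) {S : Set (ℝ × ℝ)}
    (hS : MeasurableSet S) (hfin : volume (S ∩ Ici 0) ≠ ∞) :
    Tendsto (fun ρ => ENNReal.ofReal (ρ ^ 2) * (expMeasure r).prod (expMeasure r) (ρ⁻¹ • S))
      atTop (𝓝 (ENNReal.ofReal (r ^ 2) * volume (S ∩ Ici 0))) := by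
  set c : ℝ → ℝ≥0∞ := (Ici 0).indicator fun _ => ENNReal.ofReal r
  have hc : ∀ x, c x ≠ ∞ := fun x => by
    simp only [c, indicator_apply]; split_ifs <;> simp
  have hmeas : Measurable (exponentialPDF r) := (measurable_exponentialPDFReal r).ennreal_ofReal
  have hlim : ∫⁻ p in S, c p.1 * c p.2 = ENNReal.ofReal (r ^ 2) * volume (S ∩ Ici 0) := by
    have : (fun p : ℝ × ℝ => c p.1 * c p.2) =
        (Ici 0).indicator fun _ => ENNReal.ofReal (r ^ 2) := by
      ext p
      simp only [c, indicator_apply, mem_Ici, Prod.le_def, Prod.fst_zero, Prod.snd_zero]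
      split_ifs <;> simp_all [sq]
    rw [this, lintegral_indicator_const measurableSet_Ici, Measure.restrict_apply measurableSet_Ici,
      inter_comm]
  have hdom : Tendsto
      (fun ρ => ∫⁻ p in S, exponentialPDF r (p.1 / ρ) * exponentialPDF r (p.2 / ρ))
      atTop (𝓝 (∫⁻ p in S, c p.1 * c p.2)) := by
    refine tendsto_lintegral_filter_of_dominated_convergence _
      (Eventually.of_forall fun ρ => by fun_prop) ?_
      (hlim ▸ ENNReal.mul_ne_top ENNReal.ofReal_ne_top hfin) (ae_of_all _ fun p => ?_)
    · filter_upwards [eventually_gt_atTop 0] with ρ hρ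
      exact ae_of_all _ fun p => mul_le_mul' (exponentialPDF_div_le_indicator hr hρ _)
        (exponentialPDF_div_le_indicator hr hρ _)
    · exact ENNReal.Tendsto.mul (tendsto_exponentialPDF_div_atTop r p.1) (Or.inr (hc _))
        (tendsto_exponentialPDF_div_atTop r p.2) (Or.inr (hc _))
  rw [hlim] at hdom
  refine hdom.congr' ?_
  filter_upwards [eventually_gt_atTop 0] with ρ hρ
  exact (ofReal_sq_mul_expMeasure_prod_inv_smul hρ hS).symm

end ExponentialScaling

/-- Lemma 5: the power outage probability `P^out(ρ) = P(W(X,Y) ≥ ρ)` of user 2 under hybrid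
NOMA assisted OFDMA satisfies `ρ² · P^out(ρ) → (e^R - 1)² + τ` as `ρ → ∞`, where `X, Y` are
i.i.d. rate-1 exponential channel gains and
`τ = ∫₁^{e^R} (y - 1)(min{e^{2R}, g₂(y)} - max{1, g₁(y)}) dy`. -/
theorem stmt_13 {Ω : Type*} [MeasurableSpace Ω] (μ : Measure Ω) [IsProbabilityMeasure μ]
    (X Y : Ω → ℝ) (hX : Measurable X) (hY : Measurable Y) (hXY : IndepFun X Y μ)
    (hXd : μ.map X = expMeasure 1) (hYd : μ.map Y = expMeasure 1)
    (R τ : ℝ) (hR : 0 < R)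
    (hτ : τ = ∫ y in (1 : ℝ)..Real.exp R,
      (y - 1) * (min (Real.exp (2 * R)) (g2 R y) - max 1 (g1 R y))) :
    Tendsto (fun ρ : ℝ => ρ ^ 2 * (μ {ω | ρ ≤ W R (X ω) (Y ω)}).toReal)
      atTop (nhds ((Real.exp R - 1) ^ 2 + τ)) := by
  set S := {q : ℝ × ℝ | 1 ≤ W R q.1 q.2}
  have hS : MeasurableSet S := measurableSet_le measurable_const (measurable_W R)
  have hlaw : μ.map (fun ω => (X ω, Y ω)) = (expMeasure 1).prod (expMeasure 1) := by
    rw [(indepFun_iff_map_prod_eq_prod_map_map hX.aemeasurable hY.aemeasurable).1 hXY, hXd, hYd]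
  have hevent : ∀ ρ > 0,
      μ {ω | ρ ≤ W R (X ω) (Y ω)} = (expMeasure 1).prod (expMeasure 1) (ρ⁻¹ • S) := by
    intro ρ hρ
    rw [← hlaw, Measure.map_apply (hX.prodMk hY) (hS.const_smul₀ _)]
    congr 1
    ext ω
    simp [S, mem_inv_smul_set_iff₀ hρ.ne', W_mul hρ, le_inv_mul_iff₀ hρ]
  have hint : (exp R - 1) ^ 2 + τ = ∫ b in (0 : ℝ)..exp R - 1, sliceLength R b := by
    rw [integral_sliceLength hR, hτ]
  have hnn : 0 ≤ (exp R - 1) ^ 2 + τ := hint ▸ intervalIntegral.integral_nonneg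
    (by linarith [add_one_le_exp R]) fun b hb => sliceLength_nonneg hb.1 (by linarith [hb.2])
  have hvol : volume (S ∩ Ici 0) = ENNReal.ofReal ((exp R - 1) ^ 2 + τ) := by
    rw [hint, volume_one_le_W_inter_Ici hR]
  have hlim := tendsto_ofReal_sq_mul_expMeasure_prod_inv_smul zero_le_one hS
    (hvol ▸ ENNReal.ofReal_ne_top)
  rw [hvol, one_pow, ENNReal.ofReal_one, one_mul] at hlim
  have := (ENNReal.tendsto_toReal ENNReal.ofReal_ne_top).comp hlim
  rw [ENNReal.toReal_ofReal hnn] at this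
  refine this.congr' ?_
  filter_upwards [eventually_gt_atTop 0] with ρ hρ
  simp [hevent ρ hρ, ENNReal.toReal_mul, ENNReal.toReal_ofReal (sq_nonneg ρ)]
end

section
/- Let M ≥ 2, let X₁, …, X_{M−1}, Y be independent rate-1 exponential random variables, let Z = max{X₁, …, X_{M−1}}, and let R > 0. Then user M's power diversity gain equals M: lim_{ρ→∞} −log P( e^R Y ≤ Z ≤ e^R(e^R − 1)/ρ ) / log ρ = M. -/
/-!
With `t = e^R (e^R - 1) / ρ → 0`, the outage probability is of exact order `t^M`. The outage
event forces all `M` gains below `t`, which has probability at most `t^M`. Conversely it contains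
the box where one of the first `M - 1` gains lies in `(t/2, t]` and every other gain in
`(0, e^{-R} t/2]`; by independence this box has probability at least `(e^{-(R+1)} t/2)^M`.
Taking logarithms, `-log P / log ρ → M`.
-/

open MeasureTheory ProbabilityTheory Filter Real Set Topology

lemma sub_mul_exp_neg_le_exp_neg_sub_exp_neg (a b : ℝ) :
    (b - a) * exp (-b) ≤ exp (-a) - exp (-b) :=
  calc (b - a) * exp (-b) ≤ (exp (b - a) - 1) * exp (-b) := by
        refine mul_le_mul_of_nonneg_right ?_ (exp_pos _).le
        linarith [add_one_le_exp (b - a)]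
    _ = exp (-a) - exp (-b) := by rw [sub_mul, ← exp_add]; ring_nf

section ExponentialVariables

variable {Ω : Type*} [MeasurableSpace Ω] {μ : Measure Ω}

lemma measureReal_preimage_Iic_of_map_eq_expMeasure {X : Ω → ℝ} (hX : Measurable X)
    (h : μ.map X = expMeasure 1) {a : ℝ} (ha : 0 ≤ a) :
    μ.real (X ⁻¹' Iic a) = 1 - exp (-a) := by
  have := isProbabilityMeasure_expMeasure one_pos
  rw [measureReal_def, ← Measure.map_apply hX measurableSet_Iic, h, ← ofReal_cdf,
    ENNReal.toReal_ofReal (cdf_nonneg _ _), cdf_expMeasure_eq one_pos, if_pos ha, one_mul]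

lemma measureReal_preimage_Ioc_of_map_eq_expMeasure {X : Ω → ℝ} (hX : Measurable X)
    (h : μ.map X = expMeasure 1) {a b : ℝ} (ha : 0 ≤ a) (hab : a ≤ b) :
    μ.real (X ⁻¹' Ioc a b) = exp (-a) - exp (-b) := by
  have := isProbabilityMeasure_expMeasure one_pos
  rw [measureReal_def, ← Measure.map_apply hX measurableSet_Ioc, h, ← measure_cdf (expMeasure 1),
    StieltjesFunction.measure_Ioc, ENNReal.toReal_ofReal (sub_nonneg.2 (monotone_cdf _ hab))]
  simp only [cdf_expMeasure_eq one_pos, if_pos ha, if_pos (ha.trans hab), one_mul]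
  ring

lemma ProbabilityTheory.iIndepFun.measureReal_iInter_preimage {ι : Type*} [Fintype ι]
    {V : ι → Ω → ℝ} (hV : iIndepFun V μ) {S : ι → Set ℝ} (hS : ∀ i, MeasurableSet (S i)) :
    μ.real (⋂ i, V i ⁻¹' S i) = ∏ i, μ.real (V i ⁻¹' S i) := by
  simp only [measureReal_def, hV.meas_iInter fun i => ⟨S i, hS i, rfl⟩, ENNReal.toReal_prod]

variable {ι : Type*} [Fintype ι] {V : ι → Ω → ℝ} (hmeas : ∀ i, Measurable (V i))
  (hV : iIndepFun V μ) (hdist : ∀ i, μ.map (V i) = expMeasure 1)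
include hmeas hV hdist

lemma measureReal_iInter_Iic_le_pow {t : ℝ} (ht : 0 ≤ t) :
    μ.real (⋂ i, V i ⁻¹' Iic t) ≤ t ^ Fintype.card ι := by
  rw [hV.measureReal_iInter_preimage fun _ => measurableSet_Iic, ← Finset.card_univ,
    ← Finset.prod_const]
  refine Finset.prod_le_prod (fun i _ => measureReal_nonneg) fun i _ => ?_
  rw [measureReal_preimage_Iic_of_map_eq_expMeasure (hmeas i) (hdist i) ht]
  linarith [one_sub_le_exp_neg t]

lemma pow_le_measureReal_iInter_Ioc [DecidableEq ι] (i₀ : ι) {R t : ℝ} (hR : 0 ≤ R) (ht : 0 ≤ t)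
    (ht1 : t ≤ 1) :
    (exp (-(R + 1)) * t / 2) ^ Fintype.card ι ≤ μ.real (⋂ i, V i ⁻¹'
      if i = i₀ then Ioc (t / 2) t else Ioc 0 (exp (-R) * t / 2)) := by
  have hS : ∀ i, MeasurableSet (if i = i₀ then Ioc (t / 2) t else Ioc 0 (exp (-R) * t / 2)) :=
    fun i => by split_ifs <;> exact measurableSet_Ioc
  rw [hV.measureReal_iInter_preimage hS, ← Finset.card_univ, ← Finset.prod_const]
  refine Finset.prod_le_prod (fun i _ => by positivity) fun i _ => ?_
  have hexpR : exp (-R) ≤ 1 := exp_le_one_iff.2 (by linarith)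
  have hfactor {a b : ℝ} (hab : exp (-R) * t / 2 ≤ b - a) (hb : b ≤ 1) :
      exp (-(R + 1)) * t / 2 ≤ exp (-a) - exp (-b) :=
    calc exp (-(R + 1)) * t / 2 = exp (-R) * t / 2 * exp (-1) := by rw [neg_add, exp_add]; ring
      _ ≤ (b - a) * exp (-b) := by gcongr; exact (by positivity : (0:ℝ) ≤ _).trans hab
      _ ≤ exp (-a) - exp (-b) := sub_mul_exp_neg_le_exp_neg_sub_exp_neg a b
  split_ifs
  · rw [measureReal_preimage_Ioc_of_map_eq_expMeasure (hmeas i) (hdist i) (by positivity)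
      (by linarith)]
    exact hfactor (by nlinarith) ht1
  · rw [measureReal_preimage_Ioc_of_map_eq_expMeasure (hmeas i) (hdist i) le_rfl (by positivity)]
    exact hfactor (by linarith) (by nlinarith)

end ExponentialVariables

lemma tendsto_neg_log_div_log_of_le_of_le {f : ℝ → ℝ} {a b d : ℝ} (ha : 0 < a)
    (h : ∀ᶠ ρ in atTop, a / ρ ^ d ≤ f ρ ∧ f ρ ≤ b / ρ ^ d) :
    Tendsto (fun ρ => -log (f ρ) / log ρ) atTop (𝓝 d) := by
  have hlim : ∀ c : ℝ, Tendsto (fun ρ => d - c / log ρ) atTop (𝓝 d) := fun c => by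
    simpa using tendsto_const_nhds.sub (tendsto_const_nhds.div_atTop tendsto_log_atTop)
  refine tendsto_of_tendsto_of_tendsto_of_le_of_le' (hlim (log b)) (hlim (log a)) ?_ ?_ <;>
    filter_upwards [h, eventually_gt_atTop 1] with ρ ⟨hlow, hupp⟩ hρ
  all_goals
    have hρd : 0 < ρ ^ d := rpow_pos_of_pos (by linarith) d
    have hL : 0 < log ρ := log_pos hρ
    have hf : 0 < f ρ := (div_pos ha hρd).trans_le hlow
    rw [sub_div' hL.ne', div_le_div_iff_of_pos_right hL]
  · have := log_le_log hf hupp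
    have hb : 0 < b := (div_pos_iff_of_pos_right hρd).mp (hf.trans_le hupp)
    rw [log_div hb.ne' hρd.ne', log_rpow (by linarith)] at this
    linarith
  · have := log_le_log (div_pos ha hρd) hlow
    rw [log_div ha.ne' hρd.ne', log_rpow (by linarith)] at this
    linarith

def outageEvent {Ω : Type*} (Y Z : Ω → ℝ) (R t : ℝ) : Set Ω :=
  {ω | exp R * Y ω ≤ Z ω ∧ Z ω ≤ t}

section OutageEvent

variable {Ω ι : Type*} {V : ι → Ω → ℝ} {s : Finset ι} (hs : s.Nonempty) {j : ι} {R t : ℝ}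

lemma outageEvent_subset_iInter_Iic (hcover : ∀ i ∉ s, i = j) (hR : 0 ≤ R) (ht : 0 ≤ t) :
    outageEvent (V j) (fun ω => s.sup' hs (V · ω)) R t ⊆ ⋂ i, V i ⁻¹' Iic t := by
  rintro ω ⟨hj, hZ⟩
  simp only [mem_iInter, mem_preimage, mem_Iic]
  intro i
  by_cases hi : i ∈ s
  · exact (s.le_sup' (V · ω) hi).trans hZ
  · obtain rfl := hcover i hi
    have : 1 ≤ exp R := one_le_exp hR
    rcases le_or_gt (V i ω) 0 with h | h <;> nlinarith

lemma iInter_Ioc_subset_outageEvent [DecidableEq ι] {i₀ : ι} (hi₀ : i₀ ∈ s) (hj : j ≠ i₀)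
    (hR : 0 ≤ R) (ht : 0 ≤ t) :
    (⋂ i, V i ⁻¹' if i = i₀ then Ioc (t / 2) t else Ioc 0 (exp (-R) * t / 2)) ⊆
      outageEvent (V j) (fun ω => s.sup' hs (V · ω)) R t := by
  intro ω hω
  simp only [mem_iInter, mem_preimage] at hω
  have hsmall : ∀ i ≠ i₀, V i ω ≤ exp (-R) * t / 2 := fun i hi => by
    have := hω i
    rw [if_neg hi] at this
    exact this.2
  have hbig : V i₀ ω ∈ Ioc (t / 2) t := by simpa using hω i₀
  refine ⟨?_, s.sup'_le hs _ fun i _ => ?_⟩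
  · calc exp R * V j ω ≤ exp R * (exp (-R) * t / 2) := by gcongr; exact hsmall j hj
      _ = t / 2 := by rw [mul_div_assoc', ← mul_assoc, ← exp_add]; simp
      _ ≤ V i₀ ω := hbig.1.le
      _ ≤ s.sup' hs (V · ω) := s.le_sup' (V · ω) hi₀
  · by_cases hi : i = i₀
    · exact hi ▸ hbig.2
    · nlinarith [hsmall i hi, exp_le_one_iff.2 (neg_nonpos.2 hR)]

end OutageEvent

/-- User M's power diversity gain equals `M`: with `Z` the largest of `M-1` i.i.d. rate-1
exponential channel gains and `Y` a further independent rate-1 exponential gain,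
`-log P(e^R Y ≤ Z ≤ e^R(e^R - 1)/ρ) / log ρ → M` as `ρ → ∞`. -/
theorem stmt_17 {Ω : Type*} [MeasurableSpace Ω] (μ : Measure Ω) [IsProbabilityMeasure μ]
    (M : ℕ) (hM : 2 ≤ M)
    (V : Fin M → Ω → ℝ) (hmeas : ∀ i, Measurable (V i))
    (hindep : iIndepFun V μ)
    (hdist : ∀ i, μ.map (V i) = expMeasure 1)
    (Y Z : Ω → ℝ)
    (hY : Y = V ⟨M - 1, by omega⟩)
    (hZ : ∀ ω, Z ω = (Finset.univ.filter (fun i : Fin M => (i : ℕ) < M - 1)).sup'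
        (⟨⟨0, by omega⟩, by simp [Finset.mem_filter]; omega⟩) (fun i => V i ω))
    (R : ℝ) (hR : 0 < R) :
    Tendsto (fun ρ : ℝ =>
        -Real.log (μ {ω | Real.exp R * Y ω ≤ Z ω ∧
            Z ω ≤ Real.exp R * (Real.exp R - 1) / ρ}).toReal / Real.log ρ)
      atTop (nhds (M : ℝ)) := by
  set K := exp R * (exp R - 1)
  have hK : 0 < K := mul_pos (exp_pos R) (sub_pos.2 (one_lt_exp_iff.2 hR))
  clear_value K -- otherwise `ring` unfolds `K`
  subst hY
  simp only [hZ]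
  refine tendsto_neg_log_div_log_of_le_of_le (a := (exp (-(R + 1)) * K / 2) ^ M) (b := K ^ M)
    (by positivity) ?_
  filter_upwards [eventually_ge_atTop K] with ρ hρ
  have ht : 0 ≤ K / ρ := div_nonneg hK.le (hK.le.trans hρ)
  have ht1 : K / ρ ≤ 1 := div_le_one_of_le₀ hρ (hK.le.trans hρ)
  have hlower := pow_le_measureReal_iInter_Ioc hmeas hindep hdist ⟨0, by omega⟩ hR.le ht ht1
  have hupper := measureReal_iInter_Iic_le_pow hmeas hindep hdist ht
  rw [Fintype.card_fin] at hlower hupper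
  simp only [rpow_natCast, ← measureReal_def]
  constructor
  · rw [show (exp (-(R + 1)) * K / 2) ^ M / ρ ^ M = (exp (-(R + 1)) * (K / ρ) / 2) ^ M by ring]
    refine hlower.trans
      (measureReal_mono (iInter_Ioc_subset_outageEvent _ ?_ ?_ hR.le ht) (measure_ne_top _ _))
    · exact Finset.mem_filter.2 ⟨Finset.mem_univ _, by dsimp only; omega⟩
    · exact Fin.ne_of_val_ne (by dsimp only; omega)
  · rw [← div_pow]
    refine (measureReal_mono (outageEvent_subset_iInter_Iic _ ?_ hR.le ht)
      (measure_ne_top _ _)).trans hupper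
    intro i hi
    have : ¬(i : ℕ) < M - 1 := fun h => hi (Finset.mem_filter.2 ⟨Finset.mem_univ _, h⟩)
    exact Fin.ext (by dsimp only; omega)
end
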